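/- Suppose κ is the successor of a regular infinite cardinal ν. Then U_κ ≥ min(d_κ, cov(M_{ν,κ})). -/

import Mathlib

open Cardinal Set

namespace PaperFormal

noncomputable section

/-- The least (small) cardinality of a family `F : Set X` satisfying `P`. -/
def leastCard {X : Type 1} (P : Set X → Prop) : Cardinal.{0} :=
  sInf {c : Cardinal.{0} | ∃ F : Set X, P F ∧ Cardinal.lift.{1} c = #F}

/-- The collection of (codings of) functions from `κ` to `κ`. -/
def funOn (κ : Cardinal.{0}) : Set (Ordinal.{0} → Ordinal.{0}) :=
  {f | ∀ α < κ.ord, f α < κ.ord}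

/-- The unequality number `U_κ`. -/
def uneq (κ : Cardinal.{0}) : Cardinal.{0} :=
  leastCard fun F : Set (Ordinal.{0} → Ordinal.{0}) => F ⊆ funOn κ ∧
    ∀ g ∈ funOn κ, ∃ f ∈ F, {α | α < κ.ord ∧ f α = g α} = ∅

/-- The dominating number `d_κ`. -/
def domNum (κ : Cardinal.{0}) : Cardinal.{0} :=
  leastCard fun F : Set (Ordinal.{0} → Ordinal.{0}) => F ⊆ funOn κ ∧
    ∀ g ∈ funOn κ, ∃ f ∈ F, ∀ α < κ.ord, g α < f α

/-- The number `d̄_κ`. -/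
def domBar (κ : Cardinal.{0}) : Cardinal.{0} :=
  leastCard fun X : Set (Ordinal.{0} → Ordinal.{0}) => X ⊆ funOn κ ∧
    ∀ g ∈ funOn κ, ∃ x ⊆ X, x.Nonempty ∧ #x < Cardinal.lift.{1} κ ∧
      ∀ α < κ.ord, g α < sSup {o | ∃ f ∈ x, f α = o}

/-- The generalized Cantor space `^ρ2`, with points coded as subsets of `Iio ρ.ord`. -/
def cantor (ρ : Cardinal.{0}) : Set (Set Ordinal.{0}) := {x | x ⊆ Iio ρ.ord}

/-- A forcing condition: a pair `(a, t)` with `t ⊆ a ⊆ Iio ρ.ord` and `|a| < ν`. -/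
def IsCond (ν ρ : Cardinal.{0}) (a t : Set Ordinal.{0}) : Prop :=
  a ⊆ Iio ρ.ord ∧ t ⊆ a ∧ #a < Cardinal.lift.{1} ν

/-- The basic open set determined by a condition. -/
def basicOpen (ρ : Cardinal.{0}) (a t : Set Ordinal.{0}) : Set (Set Ordinal.{0}) :=
  {x | x ⊆ Iio ρ.ord ∧ x ∩ a = t}

/-- Dense open subsets of `^ρ2` (for the `<ν`-support topology). -/
def DenseOpen (ν ρ : Cardinal.{0}) (D : Set (Set Ordinal.{0})) : Prop :=
  D ⊆ cantor ρ ∧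
  (∀ x ∈ D, ∃ a t, IsCond ν ρ a t ∧ x ∈ basicOpen ρ a t ∧ basicOpen ρ a t ⊆ D) ∧
  (∀ a t, IsCond ν ρ a t → (basicOpen ρ a t ∩ D).Nonempty)

/-- Members of `M_{ν,ρ}`. -/
def Meager (ν ρ : Cardinal.{0}) (W : Set (Set Ordinal.{0})) : Prop :=
  W ⊆ cantor ρ ∧ ∃ X : Set (Set (Set Ordinal.{0})), X.Nonempty ∧
    #X ≤ Cardinal.lift.{1} ν ∧ (∀ D ∈ X, DenseOpen ν ρ D) ∧ W ∩ ⋂₀ X = ∅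

/-- The covering number for category `cov(M_{ν,ρ})`. -/
def covM (ν ρ : Cardinal.{0}) : Cardinal.{0} :=
  leastCard fun Y : Set (Set (Set Ordinal.{0})) =>
    (∀ W ∈ Y, Meager ν ρ W) ∧ ⋃₀ Y = cantor ρ

/-- A (`κ`-complete) ideal on `κ`. -/
structure IdealK (κ : Cardinal.{0}) where
  mem : Set (Set Ordinal.{0})
  subset_iio : ∀ A ∈ mem, A ⊆ Iio κ.ord
  singleton_mem : ∀ α < κ.ord, {α} ∈ mem
  subset_mem : ∀ A ∈ mem, ∀ B ⊆ A, B ∈ mem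
  sUnion_mem : ∀ X : Set (Set Ordinal.{0}), X ⊆ mem → #X < Cardinal.lift.{1} κ → ⋃₀ X ∈ mem
  ne_top : Iio κ.ord ∉ mem

/-- `J⁺`, the sets (⊆ κ) not in the ideal. -/
def IdealK.plus {κ : Cardinal.{0}} (J : IdealK κ) : Set (Set Ordinal.{0}) :=
  {A | A ⊆ Iio κ.ord ∧ A ∉ J.mem}

/-- `cof(J)`. -/
def IdealK.cof {κ : Cardinal.{0}} (J : IdealK κ) : Cardinal.{0} :=
  leastCard fun X : Set (Set Ordinal.{0}) =>
    X ⊆ J.mem ∧ ∀ A, A ∈ J.mem ↔ ∃ B ∈ X, A ⊆ B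

/-- `cof̄(J)`. -/
def IdealK.cofBar {κ : Cardinal.{0}} (J : IdealK κ) : Cardinal.{0} :=
  leastCard fun X : Set (Set Ordinal.{0}) =>
    X ⊆ J.mem ∧ ∀ A ∈ J.mem, ∃ x ⊆ X, #x < Cardinal.lift.{1} κ ∧ A ⊆ ⋃₀ x

/-- `non_κ(P)`. -/
def nonK (κ : Cardinal.{0}) (P : IdealK κ → Prop) : Cardinal.{0} :=
  sInf {c | ∃ J : IdealK κ, J.cof = c ∧ ¬ P J}

/-- `non̄_κ(P)`. -/
def nonBarK (κ : Cardinal.{0}) (P : IdealK κ → Prop) : Cardinal.{0} :=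
  sInf {c | ∃ J : IdealK κ, J.cofBar = c ∧ ¬ P J}

/-- Weak `P`-point. -/
def WeakPPoint {κ : Cardinal.{0}} (J : IdealK κ) : Prop :=
  ∀ A ∈ J.plus, ∀ f : Ordinal.{0} → Ordinal.{0},
    (∀ α ∈ A, f α < κ.ord) → (∀ β, {α ∈ A | f α = β} ∈ J.mem) →
    ∃ B ∈ J.plus, B ⊆ A ∧ ∀ β, #{α ∈ B | f α = β} < Cardinal.lift.{1} κ

/-- Weak `Q`-point. -/
def WeakQPoint {κ : Cardinal.{0}} (J : IdealK κ) : Prop :=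
  ∀ A ∈ J.plus, ∀ g ∈ funOn κ,
    ∃ B ∈ J.plus, B ⊆ A ∧ ∀ α ∈ B, ∀ β ∈ B, α < β → g α < β

/-- Weakly selective ideal. -/
def WeaklySelective {κ : Cardinal.{0}} (J : IdealK κ) : Prop :=
  WeakPPoint J ∧ WeakQPoint J

/-- Weak semi-`Q`-point. -/
def WeakSemiQPoint {κ : Cardinal.{0}} (J : IdealK κ) : Prop :=
  ∀ A ∈ J.plus, ∀ f : Ordinal.{0} → Ordinal.{0},
    (∀ α ∈ A, f α < κ.ord) →
    (∀ β, #{α ∈ A | f α = β} < Cardinal.lift.{1} κ) →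
    ∃ C ∈ J.plus, C ⊆ A ∧ ∀ β < κ.ord, #{α ∈ C | f α = β} ≤ Cardinal.lift.{1} β.card

/-- `P_κ(λ)`, coded as the small subsets of `Iio λ.ord`. -/
def smallSet (κ lam : Cardinal.{0}) : Set (Set Ordinal.{0}) :=
  {a | a ⊆ Iio lam.ord ∧ #a < Cardinal.lift.{1} κ}

/-- The ideal `I_{κ,λ}` of noncofinal subsets of `P_κ(λ)`. -/
def Ikl (κ lam : Cardinal.{0}) : Set (Set (Set Ordinal.{0})) :=
  {A | A ⊆ smallSet κ lam ∧ ∃ a ∈ smallSet κ lam, ∀ b ∈ A, ¬ a ⊆ b}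

/-- A (`κ`-complete fine) ideal on `P_κ(λ)`. -/
structure IdealP (κ lam : Cardinal.{0}) where
  mem : Set (Set (Set Ordinal.{0}))
  subset_pk : ∀ A ∈ mem, A ⊆ smallSet κ lam
  fine : Ikl κ lam ⊆ mem
  subset_mem : ∀ A ∈ mem, ∀ B ⊆ A, B ∈ mem
  sUnion_mem : ∀ X : Set (Set (Set Ordinal.{0})), X ⊆ mem →
    #X < Cardinal.lift.{1} κ → ⋃₀ X ∈ mem
  ne_top : smallSet κ lam ∉ mem

/-- `H⁺` computed from the underlying collection `Hm` of an ideal on `P_κ(λ)`. -/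
def plusOf (κ lam : Cardinal.{0}) (Hm : Set (Set (Set Ordinal.{0}))) :
    Set (Set (Set Ordinal.{0})) :=
  {A | A ⊆ smallSet κ lam ∧ A ∉ Hm}

/-- `H⁺`. -/
def IdealP.plus {κ lam : Cardinal.{0}} (H : IdealP κ lam) : Set (Set (Set Ordinal.{0})) :=
  plusOf κ lam H.mem

/-- `cof(H)`. -/
def IdealP.cof {κ lam : Cardinal.{0}} (H : IdealP κ lam) : Cardinal.{0} :=
  leastCard fun X : Set (Set (Set Ordinal.{0})) =>
    X ⊆ H.mem ∧ ∀ A, A ∈ H.mem ↔ ∃ B ∈ X, A ⊆ B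

/-- `cof̄(H)`. -/
def IdealP.cofBar {κ lam : Cardinal.{0}} (H : IdealP κ lam) : Cardinal.{0} :=
  leastCard fun X : Set (Set (Set Ordinal.{0})) =>
    X ⊆ H.mem ∧ ∀ A ∈ H.mem, ∃ x ⊆ X, #x < Cardinal.lift.{1} κ ∧ A ⊆ ⋃₀ x

/-- `d^κ_{κ,λ}`. -/
def domP (κ lam : Cardinal.{0}) : Cardinal.{0} :=
  leastCard fun F : Set (Ordinal.{0} → Set Ordinal.{0}) =>
    (∀ f ∈ F, ∀ α < κ.ord, f α ∈ smallSet κ lam) ∧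
    ∀ g : Ordinal.{0} → Set Ordinal.{0}, (∀ α < κ.ord, g α ∈ smallSet κ lam) →
      ∃ f ∈ F, ∀ α < κ.ord, g α ⊆ f α

/-- A maximal almost disjoint family of size `≥ κ` for `H` (a member of `M_H^{≥κ}`). -/
def IsMad {κ lam : Cardinal.{0}} (H : IdealP κ lam) (Q : Set (Set (Set Ordinal.{0}))) : Prop :=
  Q ⊆ H.plus ∧ Cardinal.lift.{1} κ ≤ #Q ∧
  (∀ A ∈ Q, ∀ B ∈ Q, A ≠ B → A ∩ B ∈ H.mem) ∧
  ∀ C ∈ H.plus, ∃ A ∈ Q, A ∩ C ∈ H.plus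

/-- The (small) cardinal `c` with `lift c = c'`, used to pull `λ^{<κ} = |P_κ(λ)|` down. -/
def downCard (c : Cardinal.{1}) : Cardinal.{0} :=
  sInf {d : Cardinal.{0} | Cardinal.lift.{1} d = c}

open Classical in
/-- The number `a_H`. -/
def aNum {κ lam : Cardinal.{0}} (H : IdealP κ lam) : Cardinal.{0} :=
  if ∃ Q, IsMad H Q then sInf {c | ∃ Q, IsMad H Q ∧ Cardinal.lift.{1} c = #Q}
  else 2 ^ Order.succ (downCard #(smallSet κ lam))

/-- Weak `π`-point. -/
def WeakPiPoint {κ lam : Cardinal.{0}} (H : IdealP κ lam) : Prop :=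
  ∀ f : Ordinal.{0} → Set (Set Ordinal.{0}), (∀ α < κ.ord, f α ∈ H.mem) →
    ∀ A ∈ H.plus, ∃ B ∈ H.plus, B ⊆ A ∧ ∀ α < κ.ord, B ∩ f α ∈ Ikl κ lam

/-- `∪(a ∩ κ)`. -/
def supK (κ : Cardinal.{0}) (a : Set Ordinal.{0}) : Ordinal.{0} :=
  sSup (a ∩ Iio κ.ord)

/-- The relation `a ≺ b`. -/
def prec (κ : Cardinal.{0}) (a b : Set Ordinal.{0}) : Prop :=
  a ⊆ b ∧ supK κ a < supK κ b

/-- `[A]_κ²`. -/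
def pairsK (κ : Cardinal.{0}) (A : Set (Set Ordinal.{0})) : Set (Ordinal.{0} × Set Ordinal.{0}) :=
  {p | ∃ a ∈ A, ∃ b ∈ A, supK κ a < supK κ b ∧ p = (supK κ a, b)}

/-- `[A]_≺²`. -/
def pairsPrec (κ : Cardinal.{0}) (A : Set (Set Ordinal.{0})) :
    Set (Ordinal.{0} × Set Ordinal.{0}) :=
  {p | ∃ a ∈ A, ∃ b ∈ A, prec κ a b ∧ p = (supK κ a, b)}

/-- `[A]_{κ,κ}²`. -/
def pairsKK (κ : Cardinal.{0}) (A : Set (Set Ordinal.{0})) : Set (Ordinal.{0} × Ordinal.{0}) :=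
  {p | ∃ a ∈ A, ∃ b ∈ A, supK κ a < supK κ b ∧ p = (supK κ a, supK κ b)}

/-- `S` is a set of ordinals of order type `α`. -/
def OrdType (S : Set Ordinal.{0}) (α : Ordinal.{0}) : Prop :=
  ∃ e : Ordinal.{0} → Ordinal.{0},
    (∀ i < α, ∀ j < α, i < j → e i < e j) ∧ e '' Iio α = S

/-- `(B, ≺)` has order type `α`. -/
def OrdTypePrec (κ : Cardinal.{0}) (B : Set (Set Ordinal.{0})) (α : Ordinal.{0}) : Prop :=
  ∃ e : Ordinal.{0} → Set Ordinal.{0},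
    (∀ i < α, ∀ j < α, i < j → prec κ (e i) (e j)) ∧ e '' Iio α = B

/-- The partition relation `κ → (κ, θ)²`. -/
def ArrowKTheta (κ : Cardinal.{0}) (θ : Ordinal.{0}) : Prop :=
  ∀ f : Ordinal.{0} → Ordinal.{0} → Fin 2, ∃ A ⊆ Iio κ.ord,
    (OrdType A κ.ord ∧ ∀ α ∈ A, ∀ β ∈ A, α < β → f α β = 0) ∨
    (OrdType A θ ∧ ∀ α ∈ A, ∀ β ∈ A, α < β → f α β = 1)

/-- `κ` is weakly compact. -/
def WeaklyCompact (κ : Cardinal.{0}) : Prop :=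
  ∀ f : Ordinal.{0} → Ordinal.{0} → Fin 2, ∃ A ⊆ Iio κ.ord,
    OrdType A κ.ord ∧ ∃ i, ∀ α ∈ A, ∀ β ∈ A, α < β → f α β = i

/-- The partition relation `J⁺ → (J⁺, α)²` for an ideal on `κ`. -/
def ArrowJ {κ : Cardinal.{0}} (J : IdealK κ) (α : Ordinal.{0}) : Prop :=
  ∀ A ∈ J.plus, ∀ f : Ordinal.{0} → Ordinal.{0} → Fin 2,
    ∃ B ⊆ A, (B ∈ J.plus ∧ ∀ β ∈ B, ∀ γ ∈ B, β < γ → f β γ = 0) ∨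
             (OrdType B α ∧ ∀ β ∈ B, ∀ γ ∈ B, β < γ → f β γ = 1)

/-- The square bracket relation `J⁺ → [J⁺]_ρ²` for an ideal on `κ`. -/
def SqBrJ {κ : Cardinal.{0}} (J : IdealK κ) (ρ : Cardinal.{0}) : Prop :=
  ∀ A ∈ J.plus, ∀ f : Ordinal.{0} → Ordinal.{0} → Ordinal.{0},
    (∀ β ∈ A, ∀ γ ∈ A, β < γ → f β γ < ρ.ord) →
    ∃ B ∈ J.plus, B ⊆ A ∧ {ξ | ∃ β ∈ B, ∃ γ ∈ B, β < γ ∧ f β γ = ξ} ≠ Iio ρ.ord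

/-- `H⁺ →_κ (H⁺, α)²`. -/
def ArrowP (κ lam : Cardinal.{0}) (Hm : Set (Set (Set Ordinal.{0}))) (α : Ordinal.{0}) : Prop :=
  ∀ F : Ordinal.{0} → Set Ordinal.{0} → Fin 2, ∀ A ∈ plusOf κ lam Hm,
    ∃ B ⊆ A, (B ∈ plusOf κ lam Hm ∧ ∀ p ∈ pairsK κ B, F p.1 p.2 = 0) ∨
             (OrdTypePrec κ B α ∧ ∀ p ∈ pairsK κ B, F p.1 p.2 = 1)

/-- `H⁺ →_{κ,κ} (H⁺, α)²`. -/
def ArrowPKK (κ lam : Cardinal.{0}) (Hm : Set (Set (Set Ordinal.{0}))) (α : Ordinal.{0}) : Prop :=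
  ∀ F : Ordinal.{0} → Ordinal.{0} → Fin 2, ∀ A ∈ plusOf κ lam Hm,
    ∃ B ⊆ A, (B ∈ plusOf κ lam Hm ∧ ∀ p ∈ pairsKK κ B, F p.1 p.2 = 0) ∨
             (OrdTypePrec κ B α ∧ ∀ p ∈ pairsKK κ B, F p.1 p.2 = 1)

/-- `H⁺ →_{κ,κ} (H⁺; α)²`. -/
def ArrowPKKsemi (κ lam : Cardinal.{0}) (Hm : Set (Set (Set Ordinal.{0}))) (α : Ordinal.{0}) :
    Prop :=
  ∀ F : Ordinal.{0} → Ordinal.{0} → Fin 2, ∀ A ∈ plusOf κ lam Hm,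
    ∃ B ⊆ A, (B ∈ plusOf κ lam Hm ∧ ∀ p ∈ pairsKK κ B, F p.1 p.2 = 0) ∨
             (OrdType {o | ∃ a ∈ B, supK κ a = o} α ∧ ∀ p ∈ pairsKK κ B, F p.1 p.2 = 1)

/-- `H⁺ →_κ (H⁺)²`. -/
def ArrowPConst (κ lam : Cardinal.{0}) (Hm : Set (Set (Set Ordinal.{0}))) : Prop :=
  ∀ F : Ordinal.{0} → Set Ordinal.{0} → Fin 2, ∀ A ∈ plusOf κ lam Hm,
    ∃ B ∈ plusOf κ lam Hm, B ⊆ A ∧ ∃ i, ∀ p ∈ pairsK κ B, F p.1 p.2 = i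

/-- `H⁺ →_{κ,κ} [H⁺]_ρ²`. -/
def SqBrPKK (κ lam : Cardinal.{0}) (Hm : Set (Set (Set Ordinal.{0}))) (ρ : Cardinal.{0}) : Prop :=
  ∀ F : Ordinal.{0} → Ordinal.{0} → Ordinal.{0},
    (∀ α β : Ordinal.{0}, α < β → β < κ.ord → F α β < ρ.ord) →
    ∀ A ∈ plusOf κ lam Hm, ∃ B ∈ plusOf κ lam Hm, B ⊆ A ∧
      {ξ | ∃ p ∈ pairsKK κ B, F p.1 p.2 = ξ} ≠ Iio ρ.ord

/-- The class `K(κ,λ)`. -/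
def Kset (κ lam : Cardinal.{0}) : Set Cardinal.{0} :=
  {σ | lam ≤ σ ∧ ∃ T ⊆ smallSet κ lam, Cardinal.lift.{1} σ = #T ∧
    ∀ a ∈ smallSet κ lam, #{t ∈ T | t ⊆ a} < Cardinal.lift.{1} κ}

end

end PaperFormal

/-!
Let `F` witness `U_κ` with `|F| < d_κ`. The shifts `α ↦ f (max δ α)` of the members of `F` are
still fewer than `d_κ` (a family of size `≤ κ` never dominates, by diagonalisation), so one
`G : κ → κ` exceeds every `f ∈ F` on an unbounded set. Since `κ = ν⁺`, each `[0, G β]` is the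
image of a decoder `s β : ν → κ`. Read `x ⊆ κ` as the function `β ↦ s β η`, where `η` is the
first point of `x` in the block `[ν·β, ν·β + ν)`. As `F` is an unequality family, every `x` lies
in some `{x | f ≠ decode x everywhere}`, and this set misses the dense open set of those `x` whose
decoded function meets `f` at a block where `x` is nonempty. So `|F|` meager sets cover `^κ2`.
-/

namespace PaperFormal

section LeastCard

variable {X : Type 1} {P : Set X → Prop}

theorem leastCard_le {F : Set X} (hF : P F) {c : Cardinal.{0}} (hc : #F ≤ Cardinal.lift.{1} c) :
    leastCard P ≤ c := by
  obtain ⟨c', hc'⟩ := mem_range_lift_of_le hc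
  exact (csInf_le' (s := {c | ∃ F, P F ∧ Cardinal.lift.{1} c = #F}) ⟨F, hF, hc'⟩).trans
    (lift_le.mp (hc'.trans_le hc))

theorem le_leastCard {m d : Cardinal.{0}} (hne : ∃ F, P F ∧ #F ≤ Cardinal.lift.{1} d)
    (h : ∀ F c, P F → #F = Cardinal.lift.{1} c → m ≤ c) : m ≤ leastCard P := by
  obtain ⟨F, hF, hd⟩ := hne
  obtain ⟨c, hc⟩ := mem_range_lift_of_le hd
  exact le_csInf ⟨c, F, hF, hc⟩ fun c' ⟨F', hF', hc'⟩ => h F' c' hF' hc'.symm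

end LeastCard

theorem exists_image_eq_of_mk_le {α : Type u} {β : Type v} {S : Set α} {T : Set β} (hS : S.Nonempty)
    (h : Cardinal.lift.{v} #S ≤ Cardinal.lift.{u} #T) : ∃ e : β → α, e '' T = S := by
  classical
  obtain ⟨j⟩ := lift_mk_le'.mp h
  set i : S → β := fun a => j a
  have hi : Function.Injective i := Subtype.val_injective.comp j.injective
  refine ⟨Function.extend i Subtype.val fun _ => hS.some, subset_antisymm ?_ ?_⟩
  · rintro _ ⟨b, -, rfl⟩
    by_cases hb : ∃ a, i a = b
    · obtain ⟨a, rfl⟩ := hb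
      simpa only [hi.extend_apply] using a.2
    · simpa only [Function.extend_apply' _ _ _ hb] using hS.some_mem
  · exact fun a ha => ⟨i ⟨a, ha⟩, (j ⟨a, ha⟩).2, hi.extend_apply _ _ _⟩

theorem exists_lt_ord_forall_lt_of_mk_lt {κ : Cardinal.{u}} (hκ : κ.IsRegular)
    {s : Set Ordinal.{u}} (hs : s ⊆ Iio κ.ord) (h : #s < Cardinal.lift.{u + 1} κ) :
    ∃ β < κ.ord, ∀ γ ∈ s, γ < β := by
  have hsup : sSup s < κ.ord :=
    Ordinal.sSup_lt_of_lt_cof (by rwa [lift_ord, hκ.lift.cof_ord]) hs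
  exact ⟨Order.succ (sSup s), (isSuccLimit_ord hκ.aleph0_le).succ_lt hsup,
    fun γ hγ => Order.lt_succ_iff.mpr (le_csSup ⟨κ.ord, fun _ h => (hs h).le⟩ hγ)⟩

section Regular

variable {κ : Cardinal.{0}}

theorem exists_funOn_gt_of_le (hκ : κ.IsRegular) (φ : Ordinal.{0} → Ordinal.{0} → Ordinal.{0})
    (hφ : ∀ α < κ.ord, ∀ i ≤ α, φ i α < κ.ord) :
    ∃ G ∈ funOn κ, ∀ α < κ.ord, ∀ i ≤ α, φ i α < G α := by
  have hbound : ∀ α < κ.ord, ∃ β < κ.ord, ∀ i ≤ α, φ i α < β := by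
    intro α hα
    have hsmall : #((φ · α) '' Iic α) < Cardinal.lift.{1} κ := by
      refine mk_image_le.trans_lt ?_
      rw [← Order.Iio_succ, mk_Iio_ordinal, lift_lt, ← lt_ord]
      exact (isSuccLimit_ord hκ.aleph0_le).succ_lt hα
    obtain ⟨β, hβ, hlt⟩ := exists_lt_ord_forall_lt_of_mk_lt hκ
      (by rintro _ ⟨i, hi, rfl⟩; exact hφ α hα i hi) hsmall
    exact ⟨β, hβ, fun i hi => hlt _ ⟨i, hi, rfl⟩⟩
  choose! G hG hφG using hbound
  exact ⟨G, hG, hφG⟩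

theorem lift_lt_mk_of_dominating (hκ : κ.IsRegular) {F : Set (Ordinal.{0} → Ordinal.{0})}
    (hF : F ⊆ funOn κ) (hdom : ∀ g ∈ funOn κ, ∃ f ∈ F, ∀ α < κ.ord, g α < f α) :
    Cardinal.lift.{1} κ < #F := by
  by_contra! hle
  have hκpos : (0 : Ordinal) < κ.ord := (isSuccLimit_ord hκ.aleph0_le).bot_lt
  obtain ⟨f₀, hf₀, -⟩ := hdom (fun _ => 0) fun _ _ => hκpos
  obtain ⟨e, he⟩ := exists_image_eq_of_mk_le ⟨f₀, hf₀⟩ (T := Iio κ.ord)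
    (by rwa [lift_id, lift_id, mk_Iio_ordinal, card_ord])
  obtain ⟨G, hG, hGe⟩ := exists_funOn_gt_of_le hκ (fun i α => e i α)
    fun α hα i hi => hF (he ▸ mem_image_of_mem e (hi.trans_lt hα)) α hα
  obtain ⟨f, hf, hGf⟩ := hdom G hG
  obtain ⟨i, hi, rfl⟩ := he ▸ hf
  exact (hGe i hi i le_rfl).not_gt (hGf i hi)

theorem exists_funOn_frequently_gt (hκ : κ.IsRegular) {F : Set (Ordinal.{0} → Ordinal.{0})}
    (hF : F ⊆ funOn κ) {c : Cardinal.{0}} (hc : #F ≤ Cardinal.lift.{1} c) (hcd : c < domNum κ) :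
    ∃ G ∈ funOn κ, ∀ f ∈ F, ∀ δ < κ.ord, ∃ β, δ ≤ β ∧ β < κ.ord ∧ f β < G β := by
  set shifts := image2 (fun f δ α => f (max δ α)) F (Iio κ.ord)
  have hshifts : shifts ⊆ funOn κ := by
    rintro _ ⟨f, hf, δ, hδ, rfl⟩ α hα
    exact hF hf _ (max_lt hδ hα)
  obtain ⟨g, hg, hgshift⟩ : ∃ g ∈ funOn κ, ∀ h ∈ shifts, ∃ α < κ.ord, h α ≤ g α := by
    by_contra! hdom
    have hcard : #shifts ≤ max (Cardinal.lift.{1} c) (Cardinal.lift.{1} κ) := by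
      calc #shifts ≤ #F * #(Iio κ.ord) := mk_image2_le
        _ ≤ Cardinal.lift.{1} c * Cardinal.lift.{1} κ := by
          rw [mk_Iio_ordinal, card_ord]; gcongr
        _ ≤ _ := mul_le_max_of_aleph0_le_right (by simpa using hκ.aleph0_le)
    have hshifts_le : #shifts ≤ Cardinal.lift.{1} c :=
      (le_max_iff.mp hcard).resolve_right (lift_lt_mk_of_dominating hκ hshifts hdom).not_ge
    exact hcd.not_ge (leastCard_le ⟨hshifts, hdom⟩ hshifts_le)
  obtain ⟨G, hG, hgG⟩ := exists_funOn_gt_of_le hκ (fun i _ => g i)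
    fun α hα i hi => hg i (hi.trans_lt hα)
  refine ⟨G, hG, fun f hf δ hδ => ?_⟩
  obtain ⟨α, hα, hfg⟩ := hgshift _ ⟨f, hf, δ, hδ, rfl⟩
  exact ⟨max δ α, le_max_left δ α, max_lt hδ hα,
    hfg.trans_lt (hgG _ (max_lt hδ hα) α (le_max_right δ α))⟩

theorem exists_unequal_family_mk_le (hκ : ℵ₀ ≤ κ) :
    ∃ F, (F ⊆ funOn κ ∧ ∀ g ∈ funOn κ, ∃ f ∈ F, {α | α < κ.ord ∧ f α = g α} = ∅) ∧
      #F ≤ Cardinal.lift.{1} (κ ^ κ) := by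
  classical
  have hlim := isSuccLimit_ord hκ
  set succOn : (Iio κ.ord → Iio κ.ord) → Ordinal.{0} → Ordinal.{0} := fun g α =>
    if h : α < κ.ord then Order.succ (g ⟨α, h⟩) else 0
  refine ⟨range succOn, ⟨?_, fun g hg => ⟨_, ⟨fun α => ⟨g α, hg α α.2⟩, rfl⟩, ?_⟩⟩, ?_⟩
  · rintro _ ⟨g, rfl⟩ α hα
    simpa [succOn, hα] using hlim.succ_lt (g ⟨α, hα⟩).2
  · exact eq_empty_of_forall_notMem fun α ⟨hα, heq⟩ => by simp [succOn, hα] at heq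
  · calc #(range succOn) ≤ #(Iio κ.ord → Iio κ.ord) := mk_range_le
      _ = Cardinal.lift.{1} (κ ^ κ) := by
        rw [← power_def, mk_Iio_ordinal, card_ord, lift_power]

end Regular

section BlockCoding

variable {ν κ : Cardinal.{0}}

/-- `κ = ν⁺` is cut into the blocks `[ν·β, ν·β + ν)`; this is the position of the first point of
`x` in block `β`, and `sInf ∅ = 0` when `x` misses the block. -/
noncomputable def firstInBlock (ν : Cardinal.{0}) (x : Set Ordinal.{0}) (β : Ordinal.{0}) :
    Ordinal.{0} :=
  sInf {η | η < ν.ord ∧ ν.ord * β + η ∈ x}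

noncomputable def blockDecode (ν : Cardinal.{0}) (s : Ordinal.{0} → Ordinal.{0} → Ordinal.{0})
    (x : Set Ordinal.{0}) (β : Ordinal.{0}) : Ordinal.{0} :=
  s β (firstInBlock ν x β)

theorem firstInBlock_lt (hν : ν ≠ 0) (x : Set Ordinal.{0}) (β : Ordinal.{0}) :
    firstInBlock ν x β < ν.ord := by
  rcases eq_empty_or_nonempty {η | η < ν.ord ∧ ν.ord * β + η ∈ x} with h | h
  · rw [firstInBlock, h, Ordinal.sInf_empty, ord_pos]
    exact pos_iff_ne_zero.mpr hν
  · exact (csInf_mem h).1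

theorem firstInBlock_eq {x : Set Ordinal.{0}} {β η : Ordinal.{0}} (hη : η < ν.ord)
    (hmem : ν.ord * β + η ∈ x) (hmin : ∀ η' < η, ν.ord * β + η' ∉ x) :
    firstInBlock ν x β = η :=
  IsLeast.csInf_eq ⟨⟨hη, hmem⟩, fun η' hη' => not_lt.mp fun h => hmin η' h hη'.2⟩

theorem mul_add_mem_of_firstInBlock {x : Set Ordinal.{0}} {β η : Ordinal.{0}} (hη : η < ν.ord)
    (hmem : ν.ord * β + η ∈ x) : ν.ord * β + firstInBlock ν x β ∈ x :=
  (csInf_mem (s := {η | η < ν.ord ∧ ν.ord * β + η ∈ x}) ⟨η, hη, hmem⟩).2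

theorem mul_add_notMem_of_lt_firstInBlock {x : Set Ordinal.{0}} {β η : Ordinal.{0}}
    (hν : ν ≠ 0) (h : η < firstInBlock ν x β) : ν.ord * β + η ∉ x :=
  fun hmem => notMem_of_lt_csInf' h ⟨h.trans (firstInBlock_lt hν x β), hmem⟩

theorem card_le_of_lt_ord_succ (hκ : κ = Order.succ ν) {o : Ordinal.{0}} (ho : o < κ.ord) :
    o.card ≤ ν := by
  rwa [hκ, lt_ord, Order.lt_succ_iff] at ho

theorem mul_add_lt_ord_succ (hν : ℵ₀ ≤ ν) (hκ : κ = Order.succ ν) {β η : Ordinal.{0}}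
    (hβ : β < κ.ord) (hη : η < ν.ord) : ν.ord * β + η < κ.ord := by
  have hβν := card_le_of_lt_ord_succ hκ hβ
  rw [lt_ord, Ordinal.card_add, Ordinal.card_mul, card_ord, hκ, Order.lt_succ_iff]
  calc ν * β.card + η.card ≤ ν * ν + ν := by gcongr; exact (lt_ord.mp hη).le
    _ = ν := by rw [mul_eq_self hν, add_eq_self hν]

def blockHits (ν κ : Cardinal.{0}) (s : Ordinal.{0} → Ordinal.{0} → Ordinal.{0})
    (f : Ordinal.{0} → Ordinal.{0}) : Set (Set Ordinal.{0}) :=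
  {x | x ⊆ Iio κ.ord ∧ ∃ β < κ.ord,
    (∃ η < ν.ord, ν.ord * β + η ∈ x) ∧ blockDecode ν s x β = f β}

theorem blockHits_isOpen (hν : ℵ₀ ≤ ν) (hκ : κ = Order.succ ν)
    (s : Ordinal.{0} → Ordinal.{0} → Ordinal.{0}) (f : Ordinal.{0} → Ordinal.{0})
    {x : Set Ordinal.{0}} (hx : x ∈ blockHits ν κ s f) :
    ∃ a t, IsCond ν κ a t ∧ x ∈ basicOpen κ a t ∧ basicOpen κ a t ⊆ blockHits ν κ s f := by
  obtain ⟨hxκ, β, hβ, ⟨η, hη, hmem⟩, hdec⟩ := hx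
  have hν0 : ν ≠ 0 := (aleph0_pos.trans_le hν).ne'
  set η₀ := firstInBlock ν x β
  have hη₀ : η₀ < ν.ord := firstInBlock_lt hν0 x β
  -- Fixing the block up to its first point of `x` fixes the decoded value at `β`.
  refine ⟨(ν.ord * β + ·) '' Iic η₀, {ν.ord * β + η₀}, ⟨?_, ?_, ?_⟩, ⟨hxκ, ?_⟩, ?_⟩
  · rintro _ ⟨γ, hγ, rfl⟩
    exact mul_add_lt_ord_succ hν hκ hβ (hγ.trans_lt hη₀)
  · exact singleton_subset_iff.mpr ⟨η₀, self_mem_Iic, rfl⟩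
  · refine mk_image_le.trans_lt ?_
    rw [← Order.Iio_succ, mk_Iio_ordinal, lift_lt, ← lt_ord]
    exact (isSuccLimit_ord hν).succ_lt hη₀
  · ext z
    simp only [mem_inter_iff, mem_image, mem_Iic, mem_singleton_iff]
    constructor
    · rintro ⟨hz, γ, hγ, rfl⟩
      rcases hγ.lt_or_eq with hγ | rfl
      · exact absurd hz (mul_add_notMem_of_lt_firstInBlock hν0 hγ)
      · rfl
    · rintro rfl
      exact ⟨mul_add_mem_of_firstInBlock hη hmem, η₀, le_rfl, rfl⟩
  · rintro y ⟨hyκ, hya⟩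
    have hy_of : ∀ γ ≤ η₀, ν.ord * β + γ ∈ y → γ = η₀ := fun γ hγ hγy =>
      add_left_cancel (mem_singleton_iff.mp (hya ▸ ⟨hγy, γ, hγ, rfl⟩ :
        ν.ord * β + γ ∈ ({ν.ord * β + η₀} : Set Ordinal)))
    have hη₀y : ν.ord * β + η₀ ∈ y := (hya ▸ mem_singleton _ : _ ∈ y ∩ _).1
    have hfirst : firstInBlock ν y β = η₀ :=
      firstInBlock_eq hη₀ hη₀y fun γ hγ hγy => hγ.ne (hy_of γ hγ.le hγy)
    exact ⟨hyκ, β, hβ, ⟨η₀, hη₀, hη₀y⟩, by rw [blockDecode, hfirst]; exact hdec⟩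

theorem blockHits_inter_basicOpen_nonempty (hν : ℵ₀ ≤ ν) (hκ : κ = Order.succ ν)
    {s : Ordinal.{0} → Ordinal.{0} → Ordinal.{0}} {f : Ordinal.{0} → Ordinal.{0}}
    (hhit : ∀ δ < κ.ord, ∃ β, δ ≤ β ∧ β < κ.ord ∧ f β ∈ s β '' Iio ν.ord)
    {a t : Set Ordinal.{0}} (hat : IsCond ν κ a t) :
    (basicOpen κ a t ∩ blockHits ν κ s f).Nonempty := by
  obtain ⟨haκ, hta, ha⟩ := hat
  have hκreg : κ.IsRegular := hκ ▸ isRegular_succ hν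
  have hνκ : Cardinal.lift.{1} ν ≤ Cardinal.lift.{1} κ := lift_le.mpr (hκ ▸ Order.le_succ ν)
  obtain ⟨β₀, hβ₀, ha_lt⟩ := exists_lt_ord_forall_lt_of_mk_lt hκreg haκ (ha.trans_le hνκ)
  obtain ⟨β, hβ₀β, hβ, η, hη, hsη⟩ := hhit β₀ hβ₀
  -- Every point of the `β`-th block lies above `β ≥ β₀`, hence outside `a`.
  have hblock : ∀ γ, ν.ord * β + γ ∉ a := fun γ hγ =>
    (ha_lt _ hγ).not_ge <| hβ₀β.trans <| (Ordinal.le_mul_right β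
      (ord_pos.mpr (aleph0_pos.trans_le hν))).trans le_self_add
  have hfirst : firstInBlock ν (insert (ν.ord * β + η) t) β = η :=
    firstInBlock_eq hη (mem_insert _ _) fun γ hγ hmem => hmem.elim
      (fun h => hγ.ne (add_left_cancel h)) (fun h => hblock γ (hta h))
  have hyκ : insert (ν.ord * β + η) t ⊆ Iio κ.ord :=
    insert_subset (mul_add_lt_ord_succ hν hκ hβ hη) (hta.trans haκ)
  refine ⟨insert (ν.ord * β + η) t, ⟨hyκ, ?_⟩, hyκ, β, hβ, ⟨η, hη, mem_insert _ _⟩, ?_⟩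
  · rw [insert_inter_of_notMem (hblock η), inter_eq_left.mpr hta]
  · rw [blockDecode, hfirst, hsη]

theorem blockHits_denseOpen (hν : ℵ₀ ≤ ν) (hκ : κ = Order.succ ν)
    {s : Ordinal.{0} → Ordinal.{0} → Ordinal.{0}} {f : Ordinal.{0} → Ordinal.{0}}
    (hhit : ∀ δ < κ.ord, ∃ β, δ ≤ β ∧ β < κ.ord ∧ f β ∈ s β '' Iio ν.ord) :
    DenseOpen ν κ (blockHits ν κ s f) :=
  ⟨fun _ hx => hx.1, fun _ => blockHits_isOpen hν hκ s f,
    fun _ _ => blockHits_inter_basicOpen_nonempty hν hκ hhit⟩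

theorem meager_setOf_forall_ne_blockDecode (hν : ℵ₀ ≤ ν) (hκ : κ = Order.succ ν)
    {s : Ordinal.{0} → Ordinal.{0} → Ordinal.{0}} {f : Ordinal.{0} → Ordinal.{0}}
    (hhit : ∀ δ < κ.ord, ∃ β, δ ≤ β ∧ β < κ.ord ∧ f β ∈ s β '' Iio ν.ord) :
    Meager ν κ {x | x ⊆ Iio κ.ord ∧ ∀ α < κ.ord, f α ≠ blockDecode ν s x α} := by
  refine ⟨fun _ hx => hx.1, {blockHits ν κ s f}, singleton_nonempty _, ?_, ?_, ?_⟩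
  · rw [mk_singleton, one_le_lift_iff]
    exact one_le_aleph0.trans hν
  · rintro D rfl
    exact blockHits_denseOpen hν hκ hhit
  · rw [sInter_singleton]
    exact eq_empty_of_forall_notMem fun x ⟨⟨_, hx⟩, _, β, hβ, _, hdec⟩ => hx β hβ hdec.symm

theorem covM_le_of_unequal_blockDecode (hν : ℵ₀ ≤ ν) (hκ : κ = Order.succ ν)
    {F : Set (Ordinal.{0} → Ordinal.{0})}
    (hF : ∀ g ∈ funOn κ, ∃ f ∈ F, {α | α < κ.ord ∧ f α = g α} = ∅)
    (s : Ordinal.{0} → Ordinal.{0} → Ordinal.{0}) (hs : ∀ β < κ.ord, ∀ η < ν.ord, s β η < κ.ord)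
    (hhit : ∀ f ∈ F, ∀ δ < κ.ord, ∃ β, δ ≤ β ∧ β < κ.ord ∧ f β ∈ s β '' Iio ν.ord)
    {c : Cardinal.{0}} (hc : #F ≤ Cardinal.lift.{1} c) : covM ν κ ≤ c := by
  set avoid := fun f : Ordinal.{0} → Ordinal.{0} =>
    {x : Set Ordinal.{0} | x ⊆ Iio κ.ord ∧ ∀ α < κ.ord, f α ≠ blockDecode ν s x α}
  have hν0 : ν ≠ 0 := (aleph0_pos.trans_le hν).ne'
  have hcover : ⋃₀ (avoid '' F) = cantor κ := by
    refine subset_antisymm (sUnion_subset ?_) fun x hx => ?_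
    · rintro _ ⟨f, -, rfl⟩ x hx
      exact hx.1
    · obtain ⟨f, hf, hne⟩ := hF (blockDecode ν s x) fun β hβ => hs β hβ _ (firstInBlock_lt hν0 x β)
      exact ⟨avoid f, mem_image_of_mem avoid hf, hx, fun α hα heq =>
        (eq_empty_iff_forall_notMem.mp hne α) ⟨hα, heq⟩⟩
  refine leastCard_le ⟨?_, hcover⟩ (mk_image_le.trans hc)
  rintro _ ⟨f, hf, rfl⟩
  exact meager_setOf_forall_ne_blockDecode hν hκ (hhit f hf)

theorem exists_image_Iio_ord_eq_Iic (hν : ℵ₀ ≤ ν) {o : Ordinal.{0}} (ho : o.card ≤ ν) :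
    ∃ s : Ordinal.{0} → Ordinal.{0}, s '' Iio ν.ord = Iic o := by
  refine exists_image_eq_of_mk_le ⟨o, self_mem_Iic⟩ ?_
  rw [lift_id, lift_id, ← Order.Iio_succ, mk_Iio_ordinal, mk_Iio_ordinal, card_ord, lift_le,
    Order.succ_eq_add_one, Ordinal.card_add_one]
  exact add_le_of_le hν ho (one_le_aleph0.trans hν)

end BlockCoding

/-- If `κ` is the successor of a regular infinite cardinal `ν`, then
`U_κ ≥ min(d_κ, cov(M_{ν,κ}))`. -/
theorem uneq_ge_min (ν κ : Cardinal.{0}) (hν : ν.IsRegular) (hκ : κ = Order.succ ν) :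
    min (domNum κ) (covM ν κ) ≤ uneq κ := by
  have hκreg : κ.IsRegular := hκ ▸ isRegular_succ hν.aleph0_le
  refine le_leastCard (exists_unequal_family_mk_le hκreg.aleph0_le) fun F c ⟨hFκ, hF⟩ hc => ?_
  rcases le_or_gt (domNum κ) c with hd | hd
  · exact min_le_of_left_le hd
  obtain ⟨G, hG, hGF⟩ := exists_funOn_frequently_gt hκreg hFκ hc.le hd
  choose! s hs using fun β (hβ : β < κ.ord) =>
    exists_image_Iio_ord_eq_Iic hν.aleph0_le (card_le_of_lt_ord_succ hκ (hG β hβ))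
  refine min_le_of_right_le (covM_le_of_unequal_blockDecode hν.aleph0_le hκ hF s ?_ ?_ hc.le)
  · intro β hβ η hη
    have hsη : s β η ∈ Iic (G β) := hs β hβ ▸ mem_image_of_mem _ hη
    exact hsη.trans_lt (hG β hβ)
  · intro f hf δ hδ
    obtain ⟨β, hδβ, hβ, hfG⟩ := hGF f hf δ hδ
    exact ⟨β, hδβ, hβ, hs β hβ ▸ hfG.le⟩

end PaperFormal
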